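/- The Schlumprecht space S is isomorphic to its square: there exists a linear homeomorphism between S and S × S (equipped with the maximum norm). -/

import Mathlib

abbrev c00 : Type := ℕ →₀ ℝ

noncomputable def flog (x : ℝ) : ℝ := Real.logb 2 (x + 1)

noncomputable def supNorm (x : c00) : ℝ := ⨆ i, |x i|

def proj (E : Finset ℕ) (x : c00) : c00 := x.filter (· ∈ E)

def FLt (A B : Finset ℕ) : Prop := ∀ a ∈ A, ∀ b ∈ B, a < b

def IsNormC00 (N : c00 → ℝ) : Prop :=
  (∀ x, N x = 0 ↔ x = 0) ∧ (∀ x y, N (x + y) ≤ N x + N y) ∧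
    ∀ (a : ℝ) (x : c00), N (a • x) = |a| * N x

def schSet (N : c00 → ℝ) (x : c00) : Set ℝ :=
  {s | ∃ n : ℕ, 2 ≤ n ∧ ∃ E : Fin n → Finset ℕ,
    (∀ i j : Fin n, i < j → FLt (E i) (E j)) ∧
    s = (flog n)⁻¹ * ∑ i, N (proj (E i) x)}

def IsSchlumprechtNorm (N : c00 → ℝ) : Prop :=
  IsNormC00 N ∧ ∀ x : c00, IsLUB (insert (supNorm x) (schSet N x)) (N x)

def IsBlockSeq (x : ℕ → c00) : Prop :=
  (∀ n, x n ≠ 0) ∧ ∀ n, ∀ i ∈ (x n).support, ∀ j ∈ (x (n+1)).support, i < j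

def SeqEquiv (N : c00 → ℝ) (u v : ℕ → c00) : Prop :=
  ∃ c : ℝ, 1 ≤ c ∧ ∀ a : ℕ →₀ ℝ,
    (1 / c) * N (a.sum fun i t => t • u i) ≤ N (a.sum fun i t => t • v i) ∧
    N (a.sum fun i t => t • v i) ≤ c * N (a.sum fun i t => t • u i)

/-!
The implicit equation determines the norm: by induction on the size of the support, every
admissible family `E₁ < ⋯ < Eₙ` either leaves `x` in one piece, contributing at most
`N x / flog 2 < N x`, or cuts it into pieces of smaller support, where two solutions already
agree. Both `‖·‖_∞` and admissibility are preserved by strictly increasing relabelings of `ℕ`,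
so the norm is spreading invariant; it also does not increase under restriction to a set of
coordinates. Hence splitting `x` into its even and odd coordinates, each spread back onto `ℕ`,
is an isomorphism `c₀₀ ≅ c₀₀ × c₀₀` with constants `1` and `2`, which extends to the
completions.
-/

open Finsupp

lemma bddAbove_range_abs (x : c00) : BddAbove (Set.range fun i => |x i|) :=
  (x.finite_range.image abs).bddAbove.mono <| by
    rintro _ ⟨i, rfl⟩
    exact ⟨x i, ⟨i, rfl⟩, rfl⟩

lemma supNorm_nonneg (x : c00) : 0 ≤ supNorm x :=
  (abs_nonneg (x 0)).trans (le_ciSup (bddAbove_range_abs x) 0)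

lemma supNorm_mono {x y : c00} (h : ∀ i, |y i| ≤ |x i|) : supNorm y ≤ supNorm x :=
  ciSup_le fun i => (h i).trans (le_ciSup (bddAbove_range_abs x) i)

lemma supNorm_embDomain (f : ℕ ↪ ℕ) (x : c00) : supNorm (embDomain f x) = supNorm x := by
  refine le_antisymm (ciSup_le fun i => ?_) (ciSup_le fun a => ?_)
  · by_cases hi : i ∈ Set.range f
    · obtain ⟨a, rfl⟩ := hi
      rw [embDomain_apply_self]
      exact le_ciSup (bddAbove_range_abs x) a
    · rw [embDomain_of_notMem_range f x i hi, abs_zero]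
      exact supNorm_nonneg x
  · rw [← embDomain_apply_self f x a]
    exact le_ciSup (bddAbove_range_abs _) (f a)

lemma proj_apply (E : Finset ℕ) (x : c00) (i : ℕ) : proj E x i = if i ∈ E then x i else 0 :=
  filter_apply _ _ _

lemma proj_proj_eq_zero {E F : Finset ℕ} (h : Disjoint E F) (x : c00) :
    proj E (proj F x) = 0 := by
  ext i
  simp only [proj_apply, coe_zero, Pi.zero_apply, ite_eq_right_iff]
  exact fun hE hF => absurd hF (Finset.disjoint_left.1 h hE)

lemma proj_filter (E : Finset ℕ) (p : ℕ → Prop) [DecidablePred p] (x : c00) :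
    proj E (x.filter p) = proj (E.filter p) x := by
  ext i
  simp only [proj_apply, filter_apply, Finset.mem_filter]
  split_ifs <;> tauto

lemma proj_embDomain (f : ℕ ↪ ℕ) (E : Finset ℕ) (x : c00) :
    proj E (embDomain f x) = embDomain f (proj (E.preimage f f.injective.injOn) x) := by
  ext i
  by_cases hi : i ∈ Set.range f
  · obtain ⟨a, rfl⟩ := hi
    simp only [proj_apply, embDomain_apply_self, Finset.mem_preimage]
  · simp only [proj_apply, embDomain_of_notMem_range _ _ _ hi, ite_self]

lemma proj_map_embDomain (f : ℕ ↪ ℕ) (E : Finset ℕ) (x : c00) :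
    proj (E.map f) (embDomain f x) = embDomain f (proj E x) := by
  rw [proj_embDomain, Finset.preimage_map]

lemma proj_support_ssubset {E : Finset ℕ} {x : c00} (h : proj E x ≠ x) :
    (proj E x).support ⊂ x.support := by
  refine Finset.ssubset_iff_subset_ne.2 ⟨Finset.filter_subset _ _, fun hsupp => h ?_⟩
  refine (filter_eq_self_iff _ _).2 fun i hi => ?_
  rw [← mem_support_iff, ← hsupp] at hi
  exact (Finset.mem_filter.1 hi).2

lemma FLt.disjoint {A B : Finset ℕ} (h : FLt A B) : Disjoint A B :=
  Finset.disjoint_left.2 fun a ha hb => lt_irrefl a (h a ha a hb)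

lemma one_lt_flog_two : 1 < flog 2 := by
  rw [flog, Real.lt_logb_iff_rpow_lt one_lt_two (by norm_num)]
  norm_num

lemma flog_two_le {n : ℕ} (hn : 2 ≤ n) : flog 2 ≤ flog n := by
  unfold flog
  gcongr
  · norm_num
  · exact_mod_cast hn

lemma flog_pos {n : ℕ} (hn : 2 ≤ n) : 0 < flog n :=
  zero_lt_one.trans (one_lt_flog_two.trans_le (flog_two_le hn))

lemma schSet_embDomain {N : c00 → ℝ} {f : ℕ ↪ ℕ} (hf : StrictMono f) (x : c00) :
    schSet N (embDomain f x) = schSet (fun y => N (embDomain f y)) x := by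
  ext s
  constructor
  · rintro ⟨n, hn, E, hE, rfl⟩
    refine ⟨n, hn, fun i => (E i).preimage f f.injective.injOn, ?_, ?_⟩
    · intro i j hij a ha b hb
      rw [Finset.mem_preimage] at ha hb
      exact hf.lt_iff_lt.1 (hE i j hij _ ha _ hb)
    · simp only [proj_embDomain]
  · rintro ⟨n, hn, F, hF, rfl⟩
    refine ⟨n, hn, fun i => (F i).map f, ?_, ?_⟩
    · intro i j hij a ha b hb
      obtain ⟨a', ha', rfl⟩ := Finset.mem_map.1 ha
      obtain ⟨b', hb', rfl⟩ := Finset.mem_map.1 hb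
      exact hf (hF i j hij _ ha' _ hb')
    · simp only [proj_map_embDomain]

lemma IsNormC00.comp_linearMap {N : c00 → ℝ} (hN : IsNormC00 N) (L : c00 →ₗ[ℝ] c00)
    (hL : Function.Injective L) : IsNormC00 (N ∘ L) := by
  refine ⟨fun x => ?_, fun x y => ?_, fun a x => ?_⟩
  · rw [Function.comp_apply, hN.1, map_eq_zero_iff L hL]
  · simpa only [Function.comp_apply, map_add] using hN.2.1 (L x) (L y)
  · simpa only [Function.comp_apply, map_smul] using hN.2.2 a (L x)

namespace IsSchlumprechtNorm

variable {N M : c00 → ℝ}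

lemma map_zero (hN : IsSchlumprechtNorm N) : N 0 = 0 := (hN.1.1 0).2 rfl

lemma supNorm_le (hN : IsSchlumprechtNorm N) (x : c00) : supNorm x ≤ N x :=
  (hN.2 x).1 (Set.mem_insert _ _)

lemma nonneg (hN : IsSchlumprechtNorm N) (x : c00) : 0 ≤ N x :=
  (supNorm_nonneg x).trans (hN.supNorm_le x)

lemma le_of_mem_schSet (hN : IsSchlumprechtNorm N) {x : c00} {s : ℝ} (hs : s ∈ schSet N x) :
    s ≤ N x :=
  (hN.2 x).1 (Set.mem_insert_of_mem _ hs)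

lemma filter_le (hN : IsSchlumprechtNorm N) (p : ℕ → Prop) [DecidablePred p] (x : c00) :
    N (x.filter p) ≤ N x := by
  refine (hN.2 (x.filter p)).2 ?_
  rintro s (rfl | ⟨n, hn, E, hE, rfl⟩)
  · refine (supNorm_mono fun i => ?_).trans (hN.supNorm_le x)
    rw [filter_apply]
    split_ifs <;> simp
  · refine hN.le_of_mem_schSet ⟨n, hn, fun i => (E i).filter p,
      fun i j hij a ha b hb => hE i j hij a (Finset.filter_subset _ _ ha) b
        (Finset.filter_subset _ _ hb), ?_⟩
    simp only [proj_filter]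

lemma le_of_forall_support_ssubset (hN : IsSchlumprechtNorm N) (hM : IsSchlumprechtNorm M)
    (x : c00) (ih : ∀ y : c00, y.support ⊂ x.support → N y ≤ M y) : N x ≤ M x := by
  have hbound : N x ≤ max (M x) ((flog 2)⁻¹ * N x) := by
    refine (hN.2 x).2 ?_
    rintro s (rfl | ⟨n, hn, E, hE, rfl⟩)
    · exact le_max_of_le_left (hM.supNorm_le x)
    by_cases hwhole : ∃ i, proj (E i) x = x
    · obtain ⟨i₀, hi₀⟩ := hwhole
      have hsum : ∑ i, N (proj (E i) x) = N x := by
        rw [Finset.sum_eq_single i₀ (fun i _ hi => ?_) (by simp), hi₀]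
        rcases hi.lt_or_gt with hlt | hlt
        · rw [← hi₀, proj_proj_eq_zero (hE i i₀ hlt).disjoint, hN.map_zero]
        · rw [← hi₀, proj_proj_eq_zero (hE i₀ i hlt).disjoint.symm, hN.map_zero]
      refine le_max_of_le_right ?_
      rw [hsum]
      gcongr
      · exact hN.nonneg x
      · exact zero_lt_one.trans one_lt_flog_two
      · exact flog_two_le hn
    · simp only [not_exists] at hwhole
      refine le_max_of_le_left ((mul_le_mul_of_nonneg_left ?_ (inv_nonneg.2 (flog_pos hn).le)).trans
        (hM.le_of_mem_schSet ⟨n, hn, E, hE, rfl⟩))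
      exact Finset.sum_le_sum fun i _ => ih _ (proj_support_ssubset (hwhole i))
  have hcontract : (flog 2)⁻¹ < 1 := inv_lt_one_of_one_lt₀ one_lt_flog_two
  rcases le_max_iff.1 hbound with h | h
  · exact h
  · nlinarith [hN.nonneg x, hM.nonneg x]

lemma le (hN : IsSchlumprechtNorm N) (hM : IsSchlumprechtNorm M) (x : c00) : N x ≤ M x := by
  induction hx : x.support.card using Nat.strong_induction_on generalizing x with
  | _ n ih =>
    exact hN.le_of_forall_support_ssubset hM x fun y hy =>
      ih _ (hx ▸ Finset.card_lt_card hy) y rfl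

lemma unique (hN : IsSchlumprechtNorm N) (hM : IsSchlumprechtNorm M) : N = M :=
  funext fun x => (hN.le hM x).antisymm (hM.le hN x)

lemma comp_embDomain (hN : IsSchlumprechtNorm N) {f : ℕ ↪ ℕ} (hf : StrictMono f) :
    IsSchlumprechtNorm fun x => N (embDomain f x) := by
  have hlin : (fun x => N (embDomain f x)) = N ∘ lmapDomain ℝ ℝ f :=
    funext fun x => congrArg N (embDomain_eq_mapDomain f x)
  refine ⟨hlin ▸ hN.1.comp_linearMap _ (mapDomain_injective f.injective), fun x => ?_⟩
  simpa only [supNorm_embDomain, schSet_embDomain hf] using hN.2 (embDomain f x)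

lemma embDomain_eq (hN : IsSchlumprechtNorm N) {f : ℕ ↪ ℕ} (hf : StrictMono f) (x : c00) :
    N (embDomain f x) = N x :=
  congrFun ((hN.comp_embDomain hf).unique hN) x

lemma comapDomain_le (hN : IsSchlumprechtNorm N) {f : ℕ ↪ ℕ} (hf : StrictMono f) (x : c00) :
    N (comapDomain f x f.injective.injOn) ≤ N x := by
  classical
  have hrestrict :
      embDomain f (comapDomain f x f.injective.injOn) = x.filter (· ∈ Set.range f) := by
    ext i
    by_cases hi : i ∈ Set.range f
    · obtain ⟨a, rfl⟩ := hi
      simp [embDomain_apply_self]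
    · rw [embDomain_of_notMem_range _ _ _ hi, filter_apply, if_neg hi]
  rw [← hN.embDomain_eq hf, hrestrict]
  exact hN.filter_le _ x

end IsSchlumprechtNorm

def evenEmbedding : ℕ ↪ ℕ := Function.Embedding.inl.trans Equiv.natSumNatEquivNat.toEmbedding

def oddEmbedding : ℕ ↪ ℕ := Function.Embedding.inr.trans Equiv.natSumNatEquivNat.toEmbedding

lemma evenEmbedding_apply (n : ℕ) : evenEmbedding n = 2 * n := by
  simp [evenEmbedding, Equiv.natSumNatEquivNat_apply]

lemma oddEmbedding_apply (n : ℕ) : oddEmbedding n = 2 * n + 1 := by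
  simp [oddEmbedding, Equiv.natSumNatEquivNat_apply]

lemma evenEmbedding_strictMono : StrictMono evenEmbedding := fun a b h => by
  rw [evenEmbedding_apply, evenEmbedding_apply]
  omega

lemma oddEmbedding_strictMono : StrictMono oddEmbedding := fun a b h => by
  rw [oddEmbedding_apply, oddEmbedding_apply]
  omega

noncomputable def evenOddSplit : c00 ≃ₗ[ℝ] c00 × c00 :=
  (Finsupp.domLCongr Equiv.natSumNatEquivNat.symm).trans (sumFinsuppLEquivProdFinsupp ℝ)

lemma evenOddSplit_fst (x : c00) :
    (evenOddSplit x).1 = comapDomain evenEmbedding x evenEmbedding.injective.injOn := by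
  ext i
  simp [evenOddSplit, evenEmbedding]

lemma evenOddSplit_snd (x : c00) :
    (evenOddSplit x).2 = comapDomain oddEmbedding x oddEmbedding.injective.injOn := by
  ext i
  simp [evenOddSplit, oddEmbedding]

lemma evenOddSplit_symm_apply (a b : c00) :
    evenOddSplit.symm (a, b) = embDomain evenEmbedding a + embDomain oddEmbedding b := by
  ext i
  obtain ⟨s | s, rfl⟩ := Equiv.natSumNatEquivNat.surjective i
  · have hodd : Equiv.natSumNatEquivNat (.inl s) ∉ Set.range oddEmbedding := by
      rintro ⟨t, ht⟩
      exact Sum.inr_ne_inl (Equiv.natSumNatEquivNat.injective ht)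
    rw [Finsupp.add_apply, embDomain_of_notMem_range _ _ _ hodd, add_zero]
    change _ = embDomain evenEmbedding a (evenEmbedding s)
    simp [evenOddSplit]
  · have heven : Equiv.natSumNatEquivNat (.inr s) ∉ Set.range evenEmbedding := by
      rintro ⟨t, ht⟩
      exact Sum.inl_ne_inr (Equiv.natSumNatEquivNat.injective ht)
    rw [Finsupp.add_apply, embDomain_of_notMem_range _ _ _ heven, zero_add]
    change _ = embDomain oddEmbedding b (oddEmbedding s)
    simp [evenOddSplit]

namespace IsSchlumprechtNorm

variable {N : c00 → ℝ}

lemma evenOddSplit_fst_le (hN : IsSchlumprechtNorm N) (x : c00) : N (evenOddSplit x).1 ≤ N x :=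
  evenOddSplit_fst x ▸ hN.comapDomain_le evenEmbedding_strictMono x

lemma evenOddSplit_snd_le (hN : IsSchlumprechtNorm N) (x : c00) : N (evenOddSplit x).2 ≤ N x :=
  evenOddSplit_snd x ▸ hN.comapDomain_le oddEmbedding_strictMono x

lemma evenOddSplit_symm_le (hN : IsSchlumprechtNorm N) (p : c00 × c00) :
    N (evenOddSplit.symm p) ≤ N p.1 + N p.2 := by
  rw [evenOddSplit_symm_apply, ← hN.embDomain_eq evenEmbedding_strictMono p.1,
    ← hN.embDomain_eq oddEmbedding_strictMono p.2]
  exact hN.1.2.1 _ _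

end IsSchlumprechtNorm

/-- the Schlumprecht space `S` is isomorphic to its square. -/
theorem schlumprecht_isomorphic_to_square
    (N : c00 → ℝ) (hN : IsSchlumprechtNorm N)
    (S : Type*) [NormedAddCommGroup S] [NormedSpace ℝ S] [CompleteSpace S]
    (j : c00 →ₗ[ℝ] S) (hj : DenseRange ⇑j) (hjn : ∀ v : c00, ‖j v‖ = N v) :
    Nonempty (S ≃L[ℝ] (S × S)) := by
  have hsplit : ∀ x, ‖j.prodMap j (evenOddSplit x)‖ ≤ 1 * ‖j x‖ := fun x => by
    rw [LinearMap.prodMap_apply, Prod.norm_mk, one_mul, hjn, hjn, hjn]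
    exact max_le (hN.evenOddSplit_fst_le x) (hN.evenOddSplit_snd_le x)
  have hmerge : ∀ p, ‖j (evenOddSplit.symm p)‖ ≤ 2 * ‖j.prodMap j p‖ := fun p => by
    rw [LinearMap.prodMap_apply, Prod.norm_mk, hjn, hjn, hjn]
    linarith [hN.evenOddSplit_symm_le p, le_max_left (N p.1) (N p.2), le_max_right (N p.1) (N p.2)]
  have hdense : DenseRange (j.prodMap j) := by
    rw [LinearMap.coe_prodMap]
    exact hj.prodMap hj
  exact ⟨evenOddSplit.extend j (j.prodMap j) hj ⟨1, hsplit⟩ hdense ⟨2, hmerge⟩⟩
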